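/- Let G be a finite abstract simplicial complex and x ∈ G, and let H = G \ U(x). Then χ(G) = χ(H) + i(x), where i(x) = 1 − χ(S(x)); equivalently, χ(G) = χ(G \ U(x)) + χ(U(x)). -/
import Mathlib


open Finset Polynomial

namespace SphereFormula

variable {V : Type} [DecidableEq V]

/-- A finite abstract simplicial complex: a finite collection of nonempty finite sets
that is closed under taking nonempty subsets. -/
def IsComplex (G : Finset (Finset V)) : Prop :=
  ∀ x ∈ G, x.Nonempty ∧ ∀ y, y ⊆ x → y.Nonempty → y ∈ G

/-- `w x = (-1)^(dim x)` where `dim x = |x| - 1`. -/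
def w (x : Finset V) : ℤ := (-1) ^ (x.card - 1)

/-- Euler characteristic of a finite set of simplices: `χ(A) = Σ_{x ∈ A} w x`. -/
def chi (A : Finset (Finset V)) : ℤ := ∑ x ∈ A, w x

/-- The star `U(x) = {y ∈ G : x ⊆ y}`. -/
def star (G : Finset (Finset V)) (x : Finset V) : Finset (Finset V) :=
  G.filter fun y => x ⊆ y

/-- The unit ball `B(x) = {z ∈ G : z ⊆ y for some y ∈ U(x)}` (closure of the star). -/
def ball (G : Finset (Finset V)) (x : Finset V) : Finset (Finset V) :=
  G.filter fun z => ∃ y ∈ G, x ⊆ y ∧ z ⊆ y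

/-- The unit sphere `S(x) = B(x) \ U(x)`. -/
def sphere (G : Finset (Finset V)) (x : Finset V) : Finset (Finset V) :=
  ball G x \ star G x

/-- The vertex set of `G`: those `v` with `{v} ∈ G`. -/
def verts (G : Finset (Finset V)) : Finset V :=
  (G.biUnion id).filter fun v => {v} ∈ G

/-- Contractibility, defined inductively: a single vertex complex is contractible, and `G`
is contractible if there is `x ∈ G` with both `S(x)` and `G \ U(x)` contractible. -/
inductive Contractible : Finset (Finset V) → Prop where
  | point (v : V) : Contractible ({({v} : Finset V)} : Finset (Finset V))
  | step (G : Finset (Finset V)) (x : Finset V) (hx : x ∈ G)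
      (hS : Contractible (sphere G x)) (hG : Contractible (G \ star G x)) :
      Contractible G

mutual
  /-- `G` is a `d`-manifold (`d ≥ 0`): every unit sphere `S(x)` is a `(d-1)`-sphere. -/
  inductive IsManifold : ℤ → Finset (Finset V) → Prop where
    | mk (d : ℤ) (G : Finset (Finset V)) (hd : 0 ≤ d)
        (h : ∀ x ∈ G, IsSphere (d - 1) (sphere G x)) : IsManifold d G

  /-- `d`-spheres: the empty complex is the `(-1)`-sphere, and a `d`-sphere is a
  `d`-manifold `G` such that `G \ U(x)` is contractible for some `x ∈ G`. -/
  inductive IsSphere : ℤ → Finset (Finset V) → Prop where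
    | empty : IsSphere (-1) (∅ : Finset (Finset V))
    | mk (d : ℤ) (G : Finset (Finset V)) (hm : IsManifold d G)
        (h : ∃ x ∈ G, Contractible (G \ star G x)) : IsSphere d G
end

/-- The f-function `f_G(t) = 1 + Σ_{k ≥ 0} f_k(G) t^(k+1) = 1 + Σ_{x ∈ G} t^|x|`. -/
noncomputable def fPoly (G : Finset (Finset V)) : Polynomial ℚ :=
  1 + ∑ x ∈ G, Polynomial.X ^ x.card

/-- `F_H(t) = ∫_0^t f_H(s) ds = t + Σ_{k ≥ 0} f_k(H) t^(k+2)/(k+2)`. -/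
noncomputable def FPoly (H : Finset (Finset V)) : Polynomial ℚ :=
  Polynomial.X +
    ∑ x ∈ H, Polynomial.C (((x.card : ℚ) + 1)⁻¹) * Polynomial.X ^ (x.card + 1)

/-- The join `G + H = G ∪ H ∪ {x ∪ y : x ∈ G, y ∈ H}`. -/
def joinC (G H : Finset (Finset V)) : Finset (Finset V) :=
  G ∪ H ∪ (G ×ˢ H).image fun p => p.1 ∪ p.2

/-- The barycentric refinement: simplices are the nonempty chains in `(G, ⊆)`. -/
def bary (G : Finset (Finset V)) : Finset (Finset (Finset V)) :=
  G.powerset.filter fun c => c.Nonempty ∧ ∀ x ∈ c, ∀ y ∈ c, x ⊆ y ∨ y ⊆ x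

/-- `f` is locally injective: distinct vertices of a common simplex have distinct values. -/
def LocallyInjective (G : Finset (Finset V)) (f : V → ℤ) : Prop :=
  ∀ x ∈ G, ∀ v ∈ x, ∀ u ∈ x, v ≠ u → f v ≠ f u

lemma chi_sdiff {V : Type} [DecidableEq V] {S G : Finset (Finset V)} (h : S ⊆ G) :
    chi G = chi (G \ S) + chi S := by
  unfold chi; rw [← Finset.sum_sdiff h]

lemma chi_ball {V : Type} [DecidableEq V] (G : Finset (Finset V))
    (hG : IsComplex G) (x : Finset V) (hx : x ∈ G) : chi (ball G x) = 1 := by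
  obtain ⟨⟨v, hv⟩, -⟩ := hG x hx
  have hvB : ({v} : Finset V) ∈ ball G x := by
    refine Finset.mem_filter.2 ⟨(hG x hx).2 {v} (Finset.singleton_subset_iff.2 hv)
      ⟨v, Finset.mem_singleton_self v⟩, x, hx, subset_rfl, Finset.singleton_subset_iff.2 hv⟩
  have key : (ball G x).filter (fun z => v ∈ z)
      = insert {v} (((ball G x).filter (fun z => v ∉ z)).image (insert v)) := by
    ext z
    simp only [Finset.mem_filter, Finset.mem_insert, Finset.mem_image]
    constructor
    · rintro ⟨hzB, hvz⟩
      by_cases hz : z = {v}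
      · exact Or.inl hz
      · refine Or.inr ⟨z.erase v, ⟨?_, Finset.notMem_erase v z⟩, Finset.insert_erase hvz⟩
        obtain ⟨hzG, y, hyG, hxy, hzy⟩ := Finset.mem_filter.1 hzB
        have hne : (z.erase v).Nonempty := by
          rcases Finset.eq_empty_or_nonempty (z.erase v) with h0 | h0
          · exfalso; apply hz
            apply Finset.Subset.antisymm
            · intro u hu
              rcases eq_or_ne u v with rfl | hne
              · exact Finset.mem_singleton_self u
              · exact absurd (Finset.mem_erase.2 ⟨hne, hu⟩) (by simp [h0])
            · exact Finset.singleton_subset_iff.2 hvz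
          · exact h0
        exact Finset.mem_filter.2 ⟨(hG z hzG).2 _ (Finset.erase_subset v z) hne,
          y, hyG, hxy, (Finset.erase_subset v z).trans hzy⟩
    · rintro (rfl | ⟨u, ⟨huB, hvu⟩, rfl⟩)
      · exact ⟨hvB, Finset.mem_singleton_self v⟩
      · obtain ⟨huG, y, hyG, hxy, huy⟩ := Finset.mem_filter.1 huB
        have hsub : insert v u ⊆ y := Finset.insert_subset (hxy hv) huy
        refine ⟨Finset.mem_filter.2 ⟨(hG y hyG).2 _ hsub ⟨v, Finset.mem_insert_self v u⟩,
          y, hyG, hxy, hsub⟩, Finset.mem_insert_self v u⟩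
  have hnotmem : ({v} : Finset V) ∉ ((ball G x).filter (fun z => v ∉ z)).image (insert v) := by
    rintro h
    obtain ⟨u, huB, hu⟩ := Finset.mem_image.1 h
    obtain ⟨huB', hvu⟩ := Finset.mem_filter.1 huB
    obtain ⟨huG, -⟩ := Finset.mem_filter.1 huB'
    obtain ⟨⟨a, ha⟩, -⟩ := hG u huG
    have : a ∈ ({v} : Finset V) := hu ▸ Finset.mem_insert_of_mem ha
    rw [Finset.mem_singleton] at this
    exact hvu (this ▸ ha)
  have hinj : ∀ a ∈ (ball G x).filter (fun z => v ∉ z),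
      ∀ b ∈ (ball G x).filter (fun z => v ∉ z), insert v a = insert v b → a = b := by
    intro a ha b hb hab
    have hva := (Finset.mem_filter.1 ha).2
    have hvb := (Finset.mem_filter.1 hb).2
    have := congrArg (Finset.erase · v) hab
    simpa [Finset.erase_insert hva, Finset.erase_insert hvb] using this
  have hneg : ∀ u ∈ (ball G x).filter (fun z => v ∉ z), w (insert v u) = -w u := by
    intro u hu
    obtain ⟨huB, hvu⟩ := Finset.mem_filter.1 hu
    obtain ⟨huG, -⟩ := Finset.mem_filter.1 huB
    obtain ⟨⟨a, ha⟩, -⟩ := hG u huG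
    have hcard : 1 ≤ u.card := Finset.card_pos.2 ⟨a, ha⟩
    unfold w
    rw [Finset.card_insert_of_notMem hvu]
    have : u.card + 1 - 1 = (u.card - 1) + 1 := by omega
    rw [this, pow_succ]
    ring
  rw [chi, ← Finset.sum_filter_add_sum_filter_not (ball G x) (fun z => v ∈ z), key,
    Finset.sum_insert hnotmem, Finset.sum_image hinj, Finset.sum_congr rfl hneg]
  have : w ({v} : Finset V) = 1 := by simp [w]
  rw [this]
  simp

/-- Poincaré–Hopf step: with `H = G \\ U(x)` and `i(x) = 1 - χ(S(x))`,
one has `χ(G) = χ(H) + i(x)`; equivalently `χ(G) = χ(G \\ U(x)) + χ(U(x))`. -/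
theorem chi_remove_star {V : Type} [DecidableEq V] (G : Finset (Finset V))
    (hG : IsComplex G) (x : Finset V) (hx : x ∈ G) :
    chi G = chi (G \ star G x) + (1 - chi (sphere G x)) ∧
      chi G = chi (G \ star G x) + chi (star G x) := by
  have hstarG : star G x ⊆ G := Finset.filter_subset _ _
  have hstarB : star G x ⊆ ball G x := by
    intro y hy
    obtain ⟨hyG, hxy⟩ := Finset.mem_filter.1 hy
    exact Finset.mem_filter.2 ⟨hyG, y, hyG, hxy, subset_rfl⟩
  have h2 : chi G = chi (G \ star G x) + chi (star G x) := chi_sdiff hstarG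
  have hB : chi (ball G x) = chi (ball G x \ star G x) + chi (star G x) := chi_sdiff hstarB
  rw [chi_ball G hG x hx] at hB
  have hstar : chi (star G x) = 1 - chi (sphere G x) := by
    unfold sphere; omega
  exact ⟨by rw [h2, hstar], h2⟩

end SphereFormula
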